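/- arXiv:2504.04239 — 2 statements merged into one kernel-verified Lean document; each statement's English description precedes it below -/
import Mathlib

section
/- Let X(t) = M(R(t), p(t), v(t), g, p_L) where Ṙ = R[ω]_×, ṗ = v, v̇ = g + Ra, ṗ_i = 0, and g is constant. Then X satisfies the matrix differential equation Ẋ = [X, H] + X V, where V = V([ω]_×, 0, a, 0, 0_{3×n}) and H is the constant block matrix [[0₃, 0], [0, S]] with S ∈ ℝ^{(3+n)×(3+n)} having S_{2,1} = 1, S_{3,2} = 1 and all other entries zero, and [X, H] = XH − HX. -/
open Matrix

attribute [local instance] Matrix.normedAddCommGroup Matrix.normedSpace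

def SO3 (R : Matrix (Fin 3) (Fin 3) ℝ) : Prop := Rᵀ * R = 1 ∧ R.det = 1

/-- The skew-symmetric matrix [x]_× with [x]_× y = x × y. -/
def skew (x : Fin 3 → ℝ) : Matrix (Fin 3) (Fin 3) ℝ :=
  !![0, -x 2, x 1; x 2, 0, -x 0; -x 1, x 0, 0]

def cols (n : ℕ) (x1 x2 x3 : Fin 3 → ℝ) (xL : Matrix (Fin 3) (Fin n) ℝ) :
    Matrix (Fin 3) (Fin 3 ⊕ Fin n) ℝ :=
  Matrix.of fun i j => Sum.elim (fun k => ![x1, x2, x3] k i) (fun k => xL i k) j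

def Mblk (n : ℕ) (R : Matrix (Fin 3) (Fin 3) ℝ) (x1 x2 x3 : Fin 3 → ℝ)
    (xL : Matrix (Fin 3) (Fin n) ℝ) :
    Matrix (Fin 3 ⊕ (Fin 3 ⊕ Fin n)) (Fin 3 ⊕ (Fin 3 ⊕ Fin n)) ℝ :=
  Matrix.fromBlocks R (cols n x1 x2 x3 xL) 0 1

def Vblk (n : ℕ) (Ω : Matrix (Fin 3) (Fin 3) ℝ) (ξ1 ξ2 ξ3 : Fin 3 → ℝ)
    (ξL : Matrix (Fin 3) (Fin n) ℝ) :
    Matrix (Fin 3 ⊕ (Fin 3 ⊕ Fin n)) (Fin 3 ⊕ (Fin 3 ⊕ Fin n)) ℝ :=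
  Matrix.fromBlocks Ω (cols n ξ1 ξ2 ξ3 ξL) 0 0

/-- S ∈ ℝ^{(3+n)×(3+n)} with S_{2,1} = 1 and S_{3,2} = 1, all other entries zero. -/
def Smat (n : ℕ) : Matrix (Fin 3 ⊕ Fin n) (Fin 3 ⊕ Fin n) ℝ :=
  Matrix.of fun i j =>
    if (i = Sum.inl 1 ∧ j = Sum.inl 0) ∨ (i = Sum.inl 2 ∧ j = Sum.inl 1) then 1 else 0

def Hmat (n : ℕ) : Matrix (Fin 3 ⊕ (Fin 3 ⊕ Fin n)) (Fin 3 ⊕ (Fin 3 ⊕ Fin n)) ℝ :=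
  Matrix.fromBlocks 0 0 0 (Smat n)

lemma hasDerivAt_matrix {m k : Type*} [Fintype m] [Fintype k]
    {f : ℝ → Matrix m k ℝ} {f' : Matrix m k ℝ} {t : ℝ} :
    HasDerivAt f f' t ↔ ∀ i j, HasDerivAt (fun s => f s i j) (f' i j) t := by
  constructor
  · intro h i j
    exact (hasDerivAt_pi.mp ((hasDerivAt_pi (φ' := f')).mp h i)) j
  · intro h
    exact hasDerivAt_pi.mpr fun i => hasDerivAt_pi.mpr fun j => h i j

lemma cols_mul_S (n : ℕ) (x1 x2 x3 : Fin 3 → ℝ) (xL : Matrix (Fin 3) (Fin n) ℝ) :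
    cols n x1 x2 x3 xL * Smat n = cols n x2 x3 0 0 := by
  ext i j
  rcases j with j | j
  · fin_cases j <;>
      simp [Matrix.mul_apply, cols, Smat, Fintype.sum_sum_type, Fin.sum_univ_three]
  · simp [Matrix.mul_apply, cols, Smat, Fintype.sum_sum_type, Fin.sum_univ_three]

lemma A_mul_cols (n : ℕ) (A : Matrix (Fin 3) (Fin 3) ℝ) (x1 x2 x3 : Fin 3 → ℝ)
    (xL : Matrix (Fin 3) (Fin n) ℝ) :
    A * cols n x1 x2 x3 xL =
      cols n (A.mulVec x1) (A.mulVec x2) (A.mulVec x3) (A * xL) := by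
  ext i j
  rcases j with j | j
  · fin_cases j <;>
      simp [Matrix.mul_apply, cols, Matrix.mulVec, dotProduct]
  · simp [Matrix.mul_apply, cols]

theorem stmt3 (n : ℕ) (R : ℝ → Matrix (Fin 3) (Fin 3) ℝ) (p v : ℝ → Fin 3 → ℝ)
    (ω a : ℝ → Fin 3 → ℝ) (g : Fin 3 → ℝ) (pL : Matrix (Fin 3) (Fin n) ℝ)
    (hSO : ∀ t, SO3 (R t))
    (hR : ∀ t, HasDerivAt R (R t * skew (ω t)) t)
    (hp : ∀ t, HasDerivAt p (v t) t)
    (hv : ∀ t, HasDerivAt v (g + (R t).mulVec (a t)) t)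
    (X : ℝ → Matrix (Fin 3 ⊕ (Fin 3 ⊕ Fin n)) (Fin 3 ⊕ (Fin 3 ⊕ Fin n)) ℝ)
    (hX : X = fun t => Mblk n (R t) (p t) (v t) g pL)
    (V : ℝ → Matrix (Fin 3 ⊕ (Fin 3 ⊕ Fin n)) (Fin 3 ⊕ (Fin 3 ⊕ Fin n)) ℝ)
    (hV : V = fun t => Vblk n (skew (ω t)) 0 (a t) 0 0) :
    ∀ t, HasDerivAt X (X t * Hmat n - Hmat n * X t + X t * V t) t := by
  subst hX hV
  intro t
  have hD : (Mblk n (R t) (p t) (v t) g pL * Hmat n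
        - Hmat n * Mblk n (R t) (p t) (v t) g pL
        + Mblk n (R t) (p t) (v t) g pL * Vblk n (skew (ω t)) 0 (a t) 0 0)
      = Matrix.fromBlocks (R t * skew (ω t))
          (cols n (v t) (g + (R t).mulVec (a t)) 0 0) 0 0 := by
    simp only [Mblk, Vblk, Hmat, Matrix.fromBlocks_multiply, Matrix.mul_zero,
      Matrix.zero_mul, Matrix.mul_one, Matrix.one_mul, add_zero, zero_add,
      cols_mul_S, A_mul_cols]
    ext i j
    rcases i with i | i <;> rcases j with j | j <;>
      simp [Matrix.fromBlocks, cols, Matrix.mulVec_zero]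
    rcases j with j | j
    · fin_cases j <;> simp [Pi.add_apply]
    · simp
  rw [hD]
  apply hasDerivAt_matrix.mpr
  intro i j
  rcases i with i | i
  · rcases j with j | j
    · simpa [Mblk, Matrix.fromBlocks] using hasDerivAt_matrix.mp (hR t) i j
    · rcases j with j | j
      · fin_cases j
        · simpa [Mblk, Matrix.fromBlocks, cols] using hasDerivAt_pi.mp (hp t) i
        · simpa [Mblk, Matrix.fromBlocks, cols] using hasDerivAt_pi.mp (hv t) i
        · simpa [Mblk, Matrix.fromBlocks, cols] using hasDerivAt_const t (g i)
      · simpa [Mblk, Matrix.fromBlocks, cols] using hasDerivAt_const t (pL i j)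
  · rcases j with j | j <;>
      simp only [Mblk, Matrix.fromBlocks, Matrix.of_apply, Sum.elim_inr] <;>
      [skip; skip] <;>
      exact hasDerivAt_const t _
end

section
/- Let g ∈ ℝ³, g ≠ 0, k > 0, and consider ğ̇ = k[ğ × g]_× ğ on 𝕊²_g = {u : ‖u‖ = ‖g‖}. Along any solution, the function L₁(ğ) = ½‖g − ğ‖² satisfies L̇₁ = −k‖g × ğ‖² ≤ 0, and the function L₂(ğ) = ½‖g + ğ‖² satisfies L̇₂ = +k‖g × ğ‖² ≥ 0. -/
/-!
Along the flow `u̇ = k ((u ⨯₃ g) ⨯₃ u)` the velocity is orthogonal to `u`, and the scalar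
triple product turns `g ⬝ᵥ u̇` into `k ‖u ⨯₃ g‖² = k ‖g ⨯₃ u‖²`; differentiating
`½ ‖g ∓ u‖²` gives `∓ g ⬝ᵥ u̇ + u ⬝ᵥ u̇`.
-/

open Matrix

def cross (u v : Fin 3 → ℝ) : Fin 3 → ℝ := (skew u).mulVec v

theorem cross_eq_crossProduct (u v : Fin 3 → ℝ) : cross u v = u ⨯₃ v := by
  ext i
  fin_cases i <;>
    simp [cross, skew, cross_apply, mulVec, dotProduct, Fin.sum_univ_three] <;> ring

section Derivatives

variable {𝕜 ι : Type*} [NontriviallyNormedField 𝕜] [Fintype ι]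
  {f h : 𝕜 → ι → 𝕜} {f' h' : ι → 𝕜} {t : 𝕜}

theorem HasDerivAt.dotProduct (hf : HasDerivAt f f' t) (hh : HasDerivAt h h' t) :
    HasDerivAt (fun s => f s ⬝ᵥ h s) (f' ⬝ᵥ h t + f t ⬝ᵥ h') t := by
  refine (HasDerivAt.fun_sum (u := Finset.univ) fun i _ =>
    (hasDerivAt_pi.mp hf i).fun_mul (hasDerivAt_pi.mp hh i)).congr_deriv ?_
  exact Finset.sum_add_distrib

theorem HasDerivAt.half_dotProduct_self [CharZero 𝕜] (hf : HasDerivAt f f' t) :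
    HasDerivAt (fun s => 1 / 2 * (f s ⬝ᵥ f s)) (f t ⬝ᵥ f') t := by
  refine ((hf.dotProduct hf).const_mul (1 / 2 : 𝕜)).congr_deriv ?_
  rw [dotProduct_comm f']
  ring

end Derivatives

theorem dotProduct_self_nonneg {ι R : Type*} [Fintype ι] [Ring R] [LinearOrder R]
    [IsStrictOrderedRing R] (v : ι → R) : 0 ≤ v ⬝ᵥ v :=
  Finset.sum_nonneg fun i _ => mul_self_nonneg (v i)

theorem dotProduct_cross_cross_self {R : Type*} [CommRing R] (g u : Fin 3 → R) :
    g ⬝ᵥ (u ⨯₃ g) ⨯₃ u = (g ⨯₃ u) ⬝ᵥ (g ⨯₃ u) := by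
  rw [triple_product_permutation, ← cross_anticomm g u, neg_dotProduct_neg]

theorem stmt14_general (g : Fin 3 → ℝ) (k : ℝ) (hk : 0 < k)
    (γ : ℝ → Fin 3 → ℝ)
    (hsol : ∀ t, HasDerivAt γ (k • cross (cross (γ t) g) (γ t)) t) :
    ∀ t, (HasDerivAt (fun s => (1 / 2) * ((g - γ s) ⬝ᵥ (g - γ s)))
            (-(k * (cross g (γ t) ⬝ᵥ cross g (γ t)))) t ∧
          -(k * (cross g (γ t) ⬝ᵥ cross g (γ t))) ≤ 0) ∧
         (HasDerivAt (fun s => (1 / 2) * ((g + γ s) ⬝ᵥ (g + γ s)))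
            (k * (cross g (γ t) ⬝ᵥ cross g (γ t))) t ∧
          0 ≤ k * (cross g (γ t) ⬝ᵥ cross g (γ t))) := by
  intro t
  simp only [cross_eq_crossProduct] at hsol ⊢
  have h_orth : γ t ⬝ᵥ (γ t ⨯₃ g) ⨯₃ γ t = 0 := dot_cross_self _ _
  have h_triple := dotProduct_cross_cross_self g (γ t)
  have hnonneg := mul_nonneg hk.le (dotProduct_self_nonneg (g ⨯₃ γ t))
  refine ⟨⟨?_, neg_nonpos.mpr hnonneg⟩, ⟨?_, hnonneg⟩⟩
  · refine ((hsol t).const_sub g).half_dotProduct_self.congr_deriv ?_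
    simp only [sub_dotProduct, dotProduct_neg, dotProduct_smul, smul_eq_mul, h_orth, h_triple]
    ring
  · refine ((hsol t).const_add g).half_dotProduct_self.congr_deriv ?_
    simp only [add_dotProduct, dotProduct_smul, smul_eq_mul, h_orth, h_triple]
    ring

/-- Along solutions of ğ̇ = k[ğ × g]_× ğ on 𝕊²_g,
L₁ = ½‖g − ğ‖² satisfies L̇₁ = −k‖g × ğ‖² ≤ 0 and
L₂ = ½‖g + ğ‖² satisfies L̇₂ = +k‖g × ğ‖² ≥ 0. -/
theorem stmt14 (g : Fin 3 → ℝ) (hg : g ≠ 0) (k : ℝ) (hk : 0 < k)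
    (γ : ℝ → Fin 3 → ℝ)
    (hsol : ∀ t, HasDerivAt γ (k • cross (cross (γ t) g) (γ t)) t)
    (hsph : ∀ t, γ t ⬝ᵥ γ t = g ⬝ᵥ g) :
    ∀ t, (HasDerivAt (fun s => (1 / 2) * ((g - γ s) ⬝ᵥ (g - γ s)))
            (-(k * (cross g (γ t) ⬝ᵥ cross g (γ t)))) t ∧
          -(k * (cross g (γ t) ⬝ᵥ cross g (γ t))) ≤ 0) ∧
         (HasDerivAt (fun s => (1 / 2) * ((g + γ s) ⬝ᵥ (g + γ s)))
            (k * (cross g (γ t) ⬝ᵥ cross g (γ t))) t ∧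
          0 ≤ k * (cross g (γ t) ⬝ᵥ cross g (γ t))) :=
  stmt14_general g k hk γ hsol
end
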